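/- Let m, k be integers with 1 ≤ k ≤ m, let S be a nonempty subset of {1,...,k}, and let f_{(m,k)} be the associated function on 𝔽_3^m. Let u ∈ 𝔽_3 \ {0} and v ∈ 𝔽_3^m with wt(v) = i ≥ 1. Then, as integers: (a) the number of x ∈ 𝔽_3^m with u·f_{(m,k)}(x) + v·x = u equals 3^{m-1} + Σ_{t=1}^{k} K_t(i, m) - Σ_{t ∈ S} K_t(i, m); (b) the number of x ∈ 𝔽_3^m with u·f_{(m,k)}(x) + v·x = -u equals 3^{m-1} + Σ_{t ∈ S} K_t(i, m); (c) the number of x ∈ 𝔽_3^m with u·f_{(m,k)}(x) + v·x = 0 equals 3^{m-1} - Σ_{t=1}^{k} K_t(i, m). -/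

import Mathlib

open Finset

/-- The function `f_{(m,k)} : 𝔽_3^m → 𝔽_3` attached to a subset `S ⊆ {1,…,k}`:
`-1` if `wt(x) ∈ S`, `1` if `wt(x) ∈ {1,…,k} \ S`, `0` otherwise. -/
def fmk {m : ℕ} (k : ℕ) (S : Finset ℕ) (x : Fin m → ZMod 3) : ZMod 3 :=
  if hammingNorm x ∈ S then -1
  else if hammingNorm x ∈ Finset.Icc 1 k then 1
  else 0

/-- The ternary Krawtchouk polynomial
`K_t(i,m) = Σ_{j=0}^{t} (-1)^j·2^{t-j}·C(i,j)·C(m-i,t-j)`. -/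
def kraw (t i m : ℕ) : ℤ :=
  ∑ j ∈ Finset.range (t + 1),
    (-1 : ℤ) ^ j * 2 ^ (t - j) * (i.choose j : ℤ) * ((m - i).choose (t - j) : ℤ)

/-! Let `N_t(a)` be the number of `x` of weight `t` with `v·x = a`. Scaling `x` by a nonzero
constant shows `N_t(a) = N_t(1)` for `a ≠ 0`, and splitting off the first coordinate shows that
`N_t(0) - N_t(1)` obeys the same Pascal-type recurrences in `m` as `K_t(wt v, m)`, so the two
agree. Since `f_{(m,k)}` depends on `x` only through its weight, the number of solutions of
`u·f(x) + v·x = c` is `∑_t N_t(c - u·f(t))`, which is `∑_t N_t(1) = 3^{m-1}` (a hyperplane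
fibre, as `v ≠ 0`) plus the sum of `K_t` over the weights with `u·f(t) = c`. For (c) one also
needs `∑_{t ≤ m} K_t(i, m) = 0`, the same count for `f = 0`. -/

open Matrix

theorem Fintype.sum_sub_mul_eq_sum {F M : Type*} [Field F] [Fintype F] [AddCommMonoid M]
    (f : F → M) {c : F} (hc : c ≠ 0) (a : F) : ∑ b, f (a - c * b) = ∑ b, f b :=
  ((Equiv.mulLeft₀ c hc).trans (Equiv.subLeft a)).sum_comp f

theorem kraw_zero_left (i m : ℕ) : kraw 0 i m = 1 := by simp [kraw]

theorem kraw_succ_zero_zero (t : ℕ) : kraw (t + 1) 0 0 = 0 := by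
  simp [kraw, sum_range_succ']

theorem kraw_succ_length {i m : ℕ} (t : ℕ) (h : i ≤ m) :
    kraw (t + 1) i (m + 1) = kraw (t + 1) i m + 2 * kraw t i m := by
  unfold kraw
  rw [show m + 1 - i = (m - i) + 1 by omega, sum_range_succ, sum_range_succ (n := t + 1), mul_sum]
  have hpascal : ∀ j ∈ range (t + 1),
      (-1 : ℤ) ^ j * 2 ^ (t + 1 - j) * (i.choose j : ℤ)
          * (((m - i) + 1).choose (t + 1 - j) : ℤ)
      = (-1 : ℤ) ^ j * 2 ^ (t + 1 - j) * (i.choose j : ℤ) * ((m - i).choose (t + 1 - j) : ℤ)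
        + 2 * ((-1 : ℤ) ^ j * 2 ^ (t - j) * (i.choose j : ℤ)
          * ((m - i).choose (t - j) : ℤ)) := by
    intro j hj
    rw [show t + 1 - j = (t - j) + 1 by grind, Nat.choose_succ_succ, pow_succ]
    push_cast
    ring
  rw [sum_congr rfl hpascal, sum_add_distrib]
  simp only [Nat.sub_self, pow_zero, Nat.choose_zero_right, Nat.cast_one, mul_one]
  ring

theorem kraw_succ_weight_length {i m : ℕ} (t : ℕ) (h : i ≤ m) :
    kraw (t + 1) (i + 1) (m + 1) = kraw (t + 1) i m - kraw t i m := by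
  unfold kraw
  rw [show m + 1 - (i + 1) = m - i by omega, sum_range_succ', sum_range_succ' (fun j =>
    (-1 : ℤ) ^ j * 2 ^ (t + 1 - j) * (i.choose j : ℤ) * ((m - i).choose (t + 1 - j) : ℤ))
    (t + 1)]
  have hpascal : ∀ j ∈ range (t + 1),
      (-1 : ℤ) ^ (j + 1) * 2 ^ (t + 1 - (j + 1)) * ((i + 1).choose (j + 1) : ℤ)
          * ((m - i).choose (t + 1 - (j + 1)) : ℤ)
      = (-1 : ℤ) ^ (j + 1) * 2 ^ (t + 1 - (j + 1)) * (i.choose (j + 1) : ℤ)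
          * ((m - i).choose (t + 1 - (j + 1)) : ℤ)
        - (-1 : ℤ) ^ j * 2 ^ (t - j) * (i.choose j : ℤ) * ((m - i).choose (t - j) : ℤ) := by
    intro j _
    rw [show t + 1 - (j + 1) = t - j by omega, Nat.choose_succ_succ, pow_succ]
    push_cast
    ring
  rw [sum_congr rfl hpascal, sum_sub_distrib]
  simp only [Nat.sub_zero, Nat.choose_zero_right]
  push_cast
  ring

section WeightDistribution

variable {m : ℕ}

theorem hammingNorm_cons {β : Type*} [Zero β] [DecidableEq β] (c : β) (y : Fin m → β) :
    hammingNorm (Fin.cons c y : Fin (m + 1) → β) = (if c = 0 then 0 else 1) + hammingNorm y := by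
  simp only [hammingNorm, card_filter, Fin.sum_univ_succ, Fin.cons_zero, Fin.cons_succ]
  split_ifs <;> simp_all

theorem card_filter_fin_cons {β : Type*} [Fintype β] [DecidableEq β]
    (P : (Fin (m + 1) → β) → Prop) [DecidablePred P] :
    #{x | P x} = ∑ b : β, #{y : Fin m → β | P (Fin.cons b y)} := by
  simp only [card_filter]
  rw [← (Fin.consEquiv fun _ => β).sum_comp, Fintype.sum_prod_type]
  rfl

def weightDotCount (v : Fin m → ZMod 3) (t : ℕ) (a : ZMod 3) : ℕ :=
  #{x | hammingNorm x = t ∧ v ⬝ᵥ x = a}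

theorem weightDotCount_cons (c : ZMod 3) (w : Fin m → ZMod 3) (t : ℕ) (a : ZMod 3) :
    weightDotCount (Fin.cons c w) t a = ∑ b : ZMod 3,
      #{y : Fin m → ZMod 3 |
        (if b = 0 then 0 else 1) + hammingNorm y = t ∧ w ⬝ᵥ y = a - c * b} := by
  have hdot (b : ZMod 3) (y : Fin m → ZMod 3) :
      (Fin.cons c w : Fin (m + 1) → ZMod 3) ⬝ᵥ Fin.cons b y = c * b + w ⬝ᵥ y :=
    cons_dotProduct_cons c w b y
  simp only [weightDotCount, card_filter_fin_cons, hammingNorm_cons, hdot, eq_sub_iff_add_eq']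

theorem weightDotCount_cons_zero (c : ZMod 3) (w : Fin m → ZMod 3) (a : ZMod 3) :
    weightDotCount (Fin.cons c w) 0 a = weightDotCount w 0 a := by
  rw [weightDotCount_cons, Fintype.sum_eq_single 0]
  · simp [weightDotCount]
  · intro b hb
    simp [hb]

-- The summand `b = 0` on the right is balanced by the extra term on the left, so the
-- identity can stay in `ℕ`.
theorem weightDotCount_cons_succ (c : ZMod 3) (w : Fin m → ZMod 3) (t : ℕ) (a : ZMod 3) :
    weightDotCount (Fin.cons c w) (t + 1) a + weightDotCount w t a =
      weightDotCount w (t + 1) a + ∑ b : ZMod 3, weightDotCount w t (a - c * b) := by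
  rw [weightDotCount_cons, ← add_sum_erase _ _ (mem_univ 0), ← add_sum_erase _ _ (mem_univ 0)]
  have hsucc (b : ZMod 3) (hb : b ≠ 0) :
      #{y : Fin m → ZMod 3 | (if b = 0 then 0 else 1) + hammingNorm y = t + 1 ∧
        w ⬝ᵥ y = a - c * b} = weightDotCount w t (a - c * b) := by
    simp only [weightDotCount, hb, if_false]
    congr 1
    ext y
    simp only [mem_filter, mem_univ, true_and, add_comm 1, Nat.add_right_cancel_iff]
  rw [sum_congr rfl fun b hb => hsucc b (ne_of_mem_erase hb)]
  simp only [↓reduceIte, zero_add, mul_zero, sub_zero, weightDotCount]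
  ring

theorem weightDotCount_eq_of_ne_zero (v : Fin m → ZMod 3) (t : ℕ) {a : ZMod 3} (ha : a ≠ 0) :
    weightDotCount v t a = weightDotCount v t 1 := by
  have hweight {b : ZMod 3} (hb : b ≠ 0) (x : Fin m → ZMod 3) :
      hammingNorm (b • x) = hammingNorm x :=
    hammingNorm_smul (fun _ => (IsRegular.of_ne_zero hb).isSMulRegular) x
  refine (card_nbij' (a • ·) (a⁻¹ • ·) ?_ ?_ ?_ ?_).symm <;> intro x
  all_goals simp +contextual [hweight, ha, dotProduct_smul]

theorem weightDotCount_zero_sub_one (v : Fin m → ZMod 3) (t : ℕ) :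
    (weightDotCount v t 0 : ℤ) - weightDotCount v t 1 = kraw t (hammingNorm v) m := by
  induction m generalizing t with
  | zero =>
    rcases t with _ | t <;>
      simp [weightDotCount, hammingNorm, dotProduct, kraw_zero_left, kraw_succ_zero_zero]
  | succ m ih =>
    induction v using Fin.consCases with
    | cons c w =>
      rw [hammingNorm_cons]
      rcases t with _ | t
      · simp [weightDotCount_cons_zero, ih, kraw_zero_left]
      have hw : hammingNorm w ≤ m := hammingNorm_le_card_fintype.trans_eq (Fintype.card_fin m)
      have h0 := weightDotCount_cons_succ c w t 0
      have h1 := weightDotCount_cons_succ c w t 1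
      by_cases hc : c = 0
      · subst hc
        simp only [zero_mul, sub_zero, sum_const, card_univ, ZMod.card, smul_eq_mul] at h0 h1
        rw [if_pos rfl, zero_add, kraw_succ_length t hw, ← ih, ← ih]
        linarith
      · rw [Fintype.sum_sub_mul_eq_sum _ hc] at h0 h1
        rw [if_neg hc, add_comm 1, kraw_succ_weight_length t hw, ← ih, ← ih]
        linarith

theorem card_filter_dotProduct_eq {v : Fin m → ZMod 3} (hv : v ≠ 0) (a : ZMod 3) :
    #{x | v ⬝ᵥ x = a} = 3 ^ (m - 1) := by
  obtain ⟨j, hj⟩ := Function.ne_iff.mp hv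
  let f : (Fin m → ZMod 3) →+ ZMod 3 := AddMonoidHom.mk' (v ⬝ᵥ ·) (dotProduct_add v)
  have hsurj (b : ZMod 3) : b ∈ Set.range f :=
    ⟨Pi.single j (b / v j), by simp [f, dotProduct_single, mul_div_cancel₀ _ hj]⟩
  have hfiber (b : ZMod 3) : #{x | f x = b} = #{x | f x = a} :=
    AddMonoidHom.card_fiber_eq_of_mem_range f (hsurj b) (hsurj a)
  have htotal := card_eq_sum_card_fiberwise (s := univ) (t := univ) (f := f) fun _ _ => mem_univ _
  simp only [hfiber, sum_const, card_univ, ZMod.card, Fintype.card_pi, prod_const,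
    Fintype.card_fin, smul_eq_mul] at htotal
  have hpow : 3 ^ m = 3 * 3 ^ (m - 1) := by rw [← pow_succ', Nat.sub_add_cancel j.pos]
  change #{x | f x = a} = _
  omega

theorem weightDotCount_eq_one_add_kraw (v : Fin m → ZMod 3) (t : ℕ) (a : ZMod 3) :
    (weightDotCount v t a : ℤ) =
      weightDotCount v t 1 + if a = 0 then kraw t (hammingNorm v) m else 0 := by
  by_cases ha : a = 0
  · rw [if_pos ha, ha, ← weightDotCount_zero_sub_one]
    ring
  · rw [if_neg ha, weightDotCount_eq_of_ne_zero v t ha, add_zero]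

theorem sum_weightDotCount (v : Fin m → ZMod 3) (h : ℕ → ZMod 3) :
    ∑ t ∈ range (m + 1), weightDotCount v t (h t) = #{x | v ⬝ᵥ x = h (hammingNorm x)} := by
  rw [card_eq_sum_card_fiberwise (f := hammingNorm) (t := range (m + 1))]
  · refine sum_congr rfl fun t _ => ?_
    rw [weightDotCount, filter_filter]
    congr 1
    ext x
    simp only [mem_filter, mem_univ, true_and]
    grind
  · intro x _
    exact mem_range_succ_iff.mpr (hammingNorm_le_card_fintype.trans_eq (Fintype.card_fin m))

theorem card_filter_dotProduct_eq_comp_hammingNorm {v : Fin m → ZMod 3} (hv : v ≠ 0)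
    (h : ℕ → ZMod 3) :
    (#{x | v ⬝ᵥ x = h (hammingNorm x)} : ℤ) =
      3 ^ (m - 1) + ∑ t ∈ range (m + 1) with h t = 0, kraw t (hammingNorm v) m := by
  have hone : ∑ t ∈ range (m + 1), (weightDotCount v t 1 : ℤ) = 3 ^ (m - 1) := by
    exact_mod_cast (sum_weightDotCount v fun _ => 1).trans (card_filter_dotProduct_eq hv 1)
  rw [← sum_weightDotCount, Nat.cast_sum]
  simp only [weightDotCount_eq_one_add_kraw v _ (h _), sum_add_distrib, hone, sum_ite,
    sum_const_zero, add_zero]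

theorem sum_range_kraw_eq_zero {v : Fin m → ZMod 3} (hv : v ≠ 0) :
    ∑ t ∈ range (m + 1), kraw t (hammingNorm v) m = 0 := by
  have h := card_filter_dotProduct_eq_comp_hammingNorm hv fun _ => 0
  rw [filter_true_of_mem fun _ _ => rfl, card_filter_dotProduct_eq hv] at h
  push_cast at h
  linarith

-- `fmk k S x` unfolds to `fmkProfile k S (hammingNorm x)`.
def fmkProfile (k : ℕ) (S : Finset ℕ) (t : ℕ) : ZMod 3 :=
  if t ∈ S then -1 else if t ∈ Icc 1 k then 1 else 0

theorem card_filter_fmk_eq {k : ℕ} (S : Finset ℕ) {u b c : ZMod 3} (hu : u ≠ 0)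
    (hc : u * b = c) {v : Fin m → ZMod 3} (hv : v ≠ 0) :
    (#{x | u * fmk k S x + ∑ j, v j * x j = c} : ℤ) =
      3 ^ (m - 1) +
        ∑ t ∈ range (m + 1) with fmkProfile k S t = b, kraw t (hammingNorm v) m := by
  have hcond (x : Fin m → ZMod 3) :
      u * fmk k S x + ∑ j, v j * x j = c ↔
        v ⬝ᵥ x = c - u * fmkProfile k S (hammingNorm x) :=
    eq_sub_iff_add_eq'.symm
  simp only [hcond]
  refine (card_filter_dotProduct_eq_comp_hammingNorm hv fun t => c - u * fmkProfile k S t).trans ?_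
  simp only [sub_eq_zero, ← hc, mul_right_inj' hu, eq_comm (a := b)]

theorem filter_fmkProfile_eq_one {k : ℕ} {S : Finset ℕ} (hkm : k ≤ m) :
    {t ∈ range (m + 1) | fmkProfile k S t = 1} = Icc 1 k \ S := by
  ext t
  rw [mem_filter, fmkProfile]
  split_ifs <;> simp_all +decide
  omega

theorem filter_fmkProfile_eq_neg_one {k : ℕ} {S : Finset ℕ} (hS : S ⊆ range (m + 1)) :
    {t ∈ range (m + 1) | fmkProfile k S t = -1} = S := by
  ext t
  rw [mem_filter, fmkProfile]
  split_ifs <;> simp_all +decide [hS _]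

theorem filter_fmkProfile_eq_zero {k : ℕ} {S : Finset ℕ} (hS : S ⊆ Icc 1 k) :
    {t ∈ range (m + 1) | fmkProfile k S t = 0} = range (m + 1) \ Icc 1 k := by
  ext t
  rw [mem_filter, fmkProfile]
  split_ifs <;> simp_all +decide [hS _]

end WeightDistribution

theorem stmt_9 (m k : ℕ) (hkm : k ≤ m)
    (S : Finset ℕ) (hSsub : S ⊆ Finset.Icc 1 k)
    (u : ZMod 3) (hu : u ≠ 0)
    (v : Fin m → ZMod 3) (i : ℕ) (hvi : hammingNorm v = i) (hi1 : 1 ≤ i) :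
    (((Finset.univ.filter fun x : Fin m → ZMod 3 =>
        u * fmk k S x + ∑ j, v j * x j = u).card : ℤ)
      = 3 ^ (m - 1) + ∑ t ∈ Finset.Icc 1 k, kraw t i m - ∑ t ∈ S, kraw t i m)
    ∧ (((Finset.univ.filter fun x : Fin m → ZMod 3 =>
        u * fmk k S x + ∑ j, v j * x j = -u).card : ℤ)
      = 3 ^ (m - 1) + ∑ t ∈ S, kraw t i m)
    ∧ (((Finset.univ.filter fun x : Fin m → ZMod 3 =>
        u * fmk k S x + ∑ j, v j * x j = 0).card : ℤ)
      = 3 ^ (m - 1) - ∑ t ∈ Finset.Icc 1 k, kraw t i m) := by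
  subst hvi
  have hv : v ≠ 0 := hammingNorm_pos_iff.mp hi1
  have hIcc : Icc 1 k ⊆ range (m + 1) := fun t ht => by
    simp only [mem_Icc, mem_range] at ht ⊢
    omega
  refine ⟨?_, ?_, ?_⟩
  · rw [card_filter_fmk_eq S hu (mul_one u) hv, filter_fmkProfile_eq_one hkm,
      sum_sdiff_eq_sub hSsub]
    ring
  · rw [card_filter_fmk_eq S hu (mul_neg_one u) hv,
      filter_fmkProfile_eq_neg_one (hSsub.trans hIcc)]
  · rw [card_filter_fmk_eq S hu (mul_zero u) hv, filter_fmkProfile_eq_zero hSsub,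
      sum_sdiff_eq_sub hIcc, sum_range_kraw_eq_zero hv]
    ring
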